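/- If S is a safe set of a connected graph G with |S| = k, then G − S has at most k·Δ(G) connected components, each of size at most k; consequently |V(G)| ≤ k + k²·Δ(G). -/

import Mathlib

variable {V : Type*}

/-- Two vertex sets are adjacent if some edge joins them. -/
def SetsAdj (G : SimpleGraph V) (A B : Set V) : Prop :=
  ∃ a ∈ A, ∃ b ∈ B, G.Adj a b

/-- `u` and `v` are connected inside the induced subgraph `G[S]`. -/
def ReachIn (G : SimpleGraph V) (S : Set V) (u v : V) : Prop :=
  ∃ (hu : u ∈ S) (hv : v ∈ S), (G.induce S).Reachable ⟨u, hu⟩ ⟨v, hv⟩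

/-- `C` is (the vertex set of) a connected component of the induced subgraph `G[S]`. -/
def IsCompOf (G : SimpleGraph V) (S C : Set V) : Prop :=
  ∃ v ∈ S, C = {u | ReachIn G S u v}

/-- A safe set: nonempty, and no component of `G[S]` is adjacent to a larger
component of `G - S`. -/
def IsSafeSet (G : SimpleGraph V) (S : Set V) : Prop :=
  S.Nonempty ∧ ∀ C D : Set V, IsCompOf G S C → IsCompOf G Sᶜ D →
    SetsAdj G C D → D.ncard ≤ C.ncard

/-- A connected safe set. -/
def IsConnSafeSet (G : SimpleGraph V) (S : Set V) : Prop :=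
  IsSafeSet G S ∧ (G.induce S).Connected

/-- The safe number: minimum size of a safe set. -/
noncomputable def sNum (G : SimpleGraph V) : ℕ :=
  sInf {n | ∃ S : Set V, IsSafeSet G S ∧ S.ncard = n}

/-- The connected safe number: minimum size of a connected safe set. -/
noncomputable def csNum (G : SimpleGraph V) : ℕ :=
  sInf {n | ∃ S : Set V, IsConnSafeSet G S ∧ S.ncard = n}

/-! Because `G` is connected, every component `D` of `G - S` contains a vertex `x` adjacent to
some `y ∈ S`. Safety bounds `|D|` by the component of `G[S]` through `y`, hence by `k`; and picking
such an `x` in each component injects the components of `G - S` into the neighbourhood of `S`,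
which has at most `k Δ(G)` vertices. -/

lemma Set.Finite.ncard_biUnion_le_ncard_mul {ι α : Type*} {t : Set ι} (ht : t.Finite)
    {s : ι → Set α} {n : ℕ} (h : ∀ i ∈ t, (s i).ncard ≤ n) :
    (⋃ i ∈ t, s i).ncard ≤ t.ncard * n := by
  have := ht.toFinset.set_ncard_biUnion_le s
  simp only [Set.Finite.mem_toFinset] at this
  refine this.trans ((Finset.sum_le_card_nsmul _ _ _ fun i hi => h i ?_).trans ?_)
  · simpa using hi
  · rw [smul_eq_mul, Set.ncard_eq_toFinset_card t ht]

lemma Set.ncard_le_ncard_of_pairwiseDisjoint {α : Type*} {𝒞 : Set (Set α)} {N : Set α}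
    (hdisj : 𝒞.PairwiseDisjoint id) (hN : ∀ C ∈ 𝒞, (C ∩ N).Nonempty) (hfin : N.Finite) :
    𝒞.ncard ≤ N.ncard := by
  rcases 𝒞.eq_empty_or_nonempty with rfl | ⟨C₀, hC₀⟩
  · simp
  have : Nonempty α := ⟨(hN C₀ hC₀).some⟩
  choose! f hf using hN
  refine Set.ncard_le_ncard_of_injOn f (fun C hC => (hf C hC).2) ?_ hfin
  intro C hC C' hC' hCC'
  by_contra hne
  exact Set.disjoint_left.mp (hdisj hC hC' hne) (hf C hC).1 (hCC' ▸ (hf C' hC').1)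

section Components

variable {G : SimpleGraph V} {S T C D : Set V} {u v w : V}

lemma ReachIn.refl (hv : v ∈ T) : ReachIn G T v v :=
  ⟨hv, hv, .refl _⟩

lemma ReachIn.symm : ReachIn G T u v → ReachIn G T v u :=
  fun ⟨hu, hv, h⟩ => ⟨hv, hu, h.symm⟩

lemma ReachIn.trans : ReachIn G T u v → ReachIn G T v w → ReachIn G T u w :=
  fun ⟨hu, _, h⟩ ⟨_, hw, h'⟩ => ⟨hu, hw, h.trans h'⟩

lemma SimpleGraph.Adj.reachIn (huv : G.Adj u v) (hu : u ∈ T) (hv : v ∈ T) : ReachIn G T u v :=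
  ⟨hu, hv, SimpleGraph.Adj.reachable (G := G.induce T) (u := ⟨u, hu⟩) (v := ⟨v, hv⟩) huv⟩

lemma isCompOf_setOf_reachIn (hv : v ∈ T) : IsCompOf G T {u | ReachIn G T u v} :=
  ⟨v, hv, rfl⟩

lemma IsCompOf.subset (hC : IsCompOf G T C) : C ⊆ T := by
  obtain ⟨v, -, rfl⟩ := hC
  exact fun u hu => hu.1

lemma IsCompOf.eq_of_mem (hC : IsCompOf G T C) (hD : IsCompOf G T D) (huC : u ∈ C)
    (huD : u ∈ D) : C = D := by
  obtain ⟨v, -, rfl⟩ := hC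
  obtain ⟨w, -, rfl⟩ := hD
  have hvw : ReachIn G T v w := huC.symm.trans huD
  ext x
  exact ⟨fun hx => hx.trans hvw, fun hx => hx.trans hvw.symm⟩

lemma pairwiseDisjoint_setOf_isCompOf : {C | IsCompOf G T C}.PairwiseDisjoint id :=
  fun _ hC _ hD hCD => Set.disjoint_left.mpr fun _ huC huD => hCD (hC.eq_of_mem hD huC huD)

lemma biUnion_setOf_isCompOf : ⋃ C ∈ {C | IsCompOf G T C}, C = T := by
  refine Set.Subset.antisymm (Set.iUnion₂_subset fun C hC => IsCompOf.subset hC) fun v hv => ?_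
  exact Set.mem_biUnion (isCompOf_setOf_reachIn hv) (ReachIn.refl hv)

lemma SimpleGraph.Walk.exists_adj_of_mem_compl (p : G.Walk u v) (hu : u ∉ T) (hv : v ∈ T) :
    ∃ x, ReachIn G Tᶜ u x ∧ ∃ y ∈ T, G.Adj x y := by
  induction p with
  | nil => exact absurd hv hu
  | @cons u w v huw p ih =>
    by_cases hw : w ∈ T
    · exact ⟨u, .refl hu, w, hw, huw⟩
    · obtain ⟨x, hwx, hxy⟩ := ih hw hv
      exact ⟨x, (huw.reachIn hu hw).trans hwx, hxy⟩

lemma IsCompOf.exists_adj_of_compl (hG : G.Preconnected) (hS : S.Nonempty)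
    (hD : IsCompOf G Sᶜ D) : ∃ x ∈ D, ∃ y ∈ S, G.Adj x y := by
  obtain ⟨v, hv, rfl⟩ := hD
  obtain ⟨s, hs⟩ := hS
  obtain ⟨x, hvx, hxy⟩ := (hG v s).some.exists_adj_of_mem_compl hv hs
  exact ⟨x, hvx.symm, hxy⟩

lemma IsSafeSet.ncard_le (hG : G.Preconnected) (hS : IsSafeSet G S) (hfin : S.Finite)
    (hD : IsCompOf G Sᶜ D) : D.ncard ≤ S.ncard := by
  obtain ⟨x, hxD, y, hyS, hxy⟩ := hD.exists_adj_of_compl hG hS.1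
  have hC : IsCompOf G S {u | ReachIn G S u y} := isCompOf_setOf_reachIn hyS
  calc D.ncard ≤ {u | ReachIn G S u y}.ncard := hS.2 _ D hC hD ⟨y, .refl hyS, x, hxD, hxy.symm⟩
    _ ≤ S.ncard := Set.ncard_le_ncard hC.subset hfin

lemma ncard_compl_le_of_isSafeSet (hG : G.Preconnected) (hS : IsSafeSet G S) (hfin : S.Finite)
    (hcomp : {C | IsCompOf G Sᶜ C}.Finite) :
    Sᶜ.ncard ≤ {C | IsCompOf G Sᶜ C}.ncard * S.ncard := by
  conv_lhs => rw [← biUnion_setOf_isCompOf (G := G) (T := Sᶜ)]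
  exact hcomp.ncard_biUnion_le_ncard_mul fun D hD => hS.ncard_le hG hfin hD

end Components

section Degree

variable [Fintype V] {G : SimpleGraph V} [DecidableRel G.Adj] {S : Set V}

lemma SimpleGraph.ncard_biUnion_neighborSet_le (S : Set V) :
    (⋃ s ∈ S, G.neighborSet s).ncard ≤ S.ncard * G.maxDegree :=
  S.toFinite.ncard_biUnion_le_ncard_mul fun s _ => by
    rw [← G.coe_neighborFinset, Set.ncard_coe_finset]
    exact G.degree_le_maxDegree s

lemma ncard_setOf_isCompOf_compl_le (hG : G.Preconnected) (hS : S.Nonempty) :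
    {C | IsCompOf G Sᶜ C}.ncard ≤ S.ncard * G.maxDegree := by
  refine (Set.ncard_le_ncard_of_pairwiseDisjoint pairwiseDisjoint_setOf_isCompOf
    (fun D hD => ?_) (Set.toFinite _)).trans (G.ncard_biUnion_neighborSet_le S)
  obtain ⟨x, hxD, y, hyS, hxy⟩ := IsCompOf.exists_adj_of_compl hG hS hD
  exact ⟨x, hxD, Set.mem_biUnion hyS hxy.symm⟩

end Degree

theorem stmt1 [Fintype V] (G : SimpleGraph V) [DecidableRel G.Adj]
    (hG : G.Connected) (S : Set V) (k : ℕ) (hS : IsSafeSet G S) (hk : S.ncard = k) :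
    {C : Set V | IsCompOf G Sᶜ C}.ncard ≤ k * G.maxDegree ∧
    (∀ C : Set V, IsCompOf G Sᶜ C → C.ncard ≤ k) ∧
    Fintype.card V ≤ k + k ^ 2 * G.maxDegree := by
  subst hk
  have hcount := ncard_setOf_isCompOf_compl_le hG.preconnected hS.1
  refine ⟨hcount, fun D hD => hS.ncard_le hG.preconnected S.toFinite hD, ?_⟩
  have hcompl := ncard_compl_le_of_isSafeSet hG.preconnected hS S.toFinite (Set.toFinite _)
  calc Fintype.card V = S.ncard + Sᶜ.ncard := by
        rw [← Nat.card_eq_fintype_card, Set.ncard_add_ncard_compl]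
    _ ≤ S.ncard + S.ncard * G.maxDegree * S.ncard := by gcongr; exact hcompl.trans (by gcongr)
    _ = S.ncard + S.ncard ^ 2 * G.maxDegree := by ring
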